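/- arXiv:1805.10886 — 3 statements merged into one kernel-verified Lean document; each statement's English description precedes it below -/
import Mathlib

section
/- Let σ² > σ_{GP}² > 0. Then for any fixed r ∈ ℝ, ∫ N(r | r̄, σ²)⁻¹ N(r̄ | μ_{GP}, σ_{GP}²) dr̄ = (σ²/(σ² - σ_{GP}²)) · N(r | μ_{GP}, σ² - σ_{GP}²)⁻¹, i.e. if r̄ ~ N(μ_{GP}, σ_{GP}²) then E[ N(r | r̄, σ²)⁻¹ ] = (σ²/(σ² - σ_{GP}²)) · N(r | μ_{GP}, σ² - σ_{GP}²)⁻¹. -/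
open MeasureTheory Real

/-- One-dimensional Gaussian density `N(x | μ, σ²)`. -/
noncomputable def gauss (μ σ2 x : ℝ) : ℝ :=
  (Real.sqrt (2 * Real.pi * σ2))⁻¹ * Real.exp (-(x - μ)^2 / (2 * σ2))

/-- Expectation, under a Gaussian posterior `r̄ ~ N(μ_GP, σ_GP²)`, of the reciprocal of a
Gaussian density evaluated at a fixed point `r`:
`∫ N(r | r̄, σ²)⁻¹ N(r̄ | μ_GP, σ_GP²) dr̄ = (σ²/(σ² − σ_GP²)) · N(r | μ_GP, σ² − σ_GP²)⁻¹`. -/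
theorem expected_inv_gauss (σ2 σGP2 μGP r : ℝ) (hGP : 0 < σGP2) (hlt : σGP2 < σ2) :
    (∫ rb : ℝ, (gauss rb σ2 r)⁻¹ * gauss μGP σGP2 rb) =
      (σ2 / (σ2 - σGP2)) * (gauss μGP (σ2 - σGP2) r)⁻¹ := by
  have hA : 0 < σ2 := hGP.trans hlt
  have hD : 0 < σ2 - σGP2 := sub_pos.mpr hlt
  set a : ℝ := (σ2 - σGP2) / (2 * σ2 * σGP2) with ha
  set m : ℝ := (σ2 * μGP - σGP2 * r) / (σ2 - σGP2) with hm
  have ha0 : 0 < a := by positivity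
  set K : ℝ := Real.sqrt (2 * Real.pi * σ2) * (Real.sqrt (2 * Real.pi * σGP2))⁻¹ *
      Real.exp ((r - μGP)^2 / (2 * (σ2 - σGP2))) with hK
  have hexp : ∀ rb : ℝ, -(-(r - rb)^2 / (2*σ2)) + (-(rb - μGP)^2/(2*σGP2)) =
      (r - μGP)^2 / (2 * (σ2 - σGP2)) + (-a * (rb - m)^2) := by
    intro rb
    rw [ha, hm]
    field_simp
    ring
  have hfun : ∀ rb : ℝ, (gauss rb σ2 r)⁻¹ * gauss μGP σGP2 rb =
      K * Real.exp (-a * (rb - m)^2) := by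
    intro rb
    simp only [gauss, mul_inv, inv_inv, ← Real.exp_neg]
    rw [mul_mul_mul_comm, ← Real.exp_add, hexp rb, Real.exp_add, hK]
    ring
  simp only [hfun]
  rw [integral_const_mul]
  have hshift : (∫ rb : ℝ, Real.exp (-a * (rb - m)^2)) = ∫ x : ℝ, Real.exp (-a * x^2) :=
    integral_sub_right_eq_self (fun x => Real.exp (-a * x^2)) m
  rw [hshift, integral_gaussian]
  -- now the constants
  unfold gauss
  rw [mul_inv, inv_inv, ← Real.exp_neg, neg_div, neg_neg, hK]
  have hs : Real.sqrt (2*Real.pi*σ2) * (Real.sqrt (2*Real.pi*σGP2))⁻¹ * Real.sqrt (Real.pi/a) =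
      σ2/(σ2-σGP2) * Real.sqrt (2*Real.pi*(σ2-σGP2)) := by
    rw [← Real.sqrt_inv, ← Real.sqrt_mul (by positivity), ← Real.sqrt_mul (by positivity)]
    rw [show σ2/(σ2-σGP2) * Real.sqrt (2*Real.pi*(σ2-σGP2)) =
        Real.sqrt ((σ2/(σ2-σGP2))^2 * (2*Real.pi*(σ2-σGP2))) from ?_]
    · congr 1
      rw [ha]
      field_simp
    · rw [Real.sqrt_mul (by positivity : (0:ℝ) ≤ (σ2/(σ2-σGP2))^2), Real.sqrt_sq (by positivity)]
  calc Real.sqrt (2*Real.pi*σ2) * (Real.sqrt (2*Real.pi*σGP2))⁻¹ *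
        Real.exp ((r - μGP)^2 / (2 * (σ2 - σGP2))) * Real.sqrt (Real.pi/a)
      = (Real.sqrt (2*Real.pi*σ2) * (Real.sqrt (2*Real.pi*σGP2))⁻¹ * Real.sqrt (Real.pi/a)) *
        Real.exp ((r - μGP)^2 / (2 * (σ2 - σGP2))) := by ring
    _ = σ2/(σ2-σGP2) * (Real.sqrt (2*Real.pi*(σ2-σGP2)) *
        Real.exp ((r - μGP)^2 / (2 * (σ2 - σGP2)))) := by rw [hs]; ring
end

section
/- Suppose the target reward density is N(· | r̄⁽⁰⁾, σ₀²) and the source reward density is N(· | r̄⁽ʲ⁾, σⱼ²), where r̄⁽⁰⁾ ~ N(μ_{GP₀}, σ_{GP₀}²) and r̄⁽ʲ⁾ ~ N(μ_{GPⱼ}, σ_{GPⱼ}²) are independent, and σ_{GPⱼ}² < σⱼ². Then the expected importance weight w = N(r | r̄⁽⁰⁾, σ₀²)/N(r | r̄⁽ʲ⁾, σⱼ²) satisfies E[w] = (σⱼ²/(σⱼ² − σ_{GPⱼ}²)) · N(r | μ_{GP₀}, σ₀² + σ_{GP₀}²) / N(r | μ_{GPⱼ}, σⱼ² − σ_{GPⱼ}²).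 -/
open MeasureTheory Real

/-!
The importance weight times the density of the means factorises into a function of `r̄⁽⁰⁾`
and a function of `r̄⁽ʲ⁾`. Completing the square in the integration variable, each factor is a
constant times a normalised Gaussian density:
`N(r | x, a) N(x | μ, b) = N(r | μ, a + b) N(x | ·, ab/(a + b))` and
`N(x | μ, s) / N(r | x, σ) = σ/(σ - s) · N(x | ·, sσ/(σ - s)) / N(r | μ, σ - s)`,
where `s < σ` is exactly what makes the second quadratic exponent negative definite.
Integrating out the two densities leaves the product of the constants.
-/

open ProbabilityTheory

lemma gauss_eq_gaussianPDFReal {v : ℝ} (hv : 0 ≤ v) (μ : ℝ) :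
    gauss μ v = gaussianPDFReal μ v.toNNReal := by
  ext x
  simp [gauss, gaussianPDFReal, Real.coe_toNNReal v hv]

lemma integral_gauss {v : ℝ} (hv : 0 < v) (μ : ℝ) : ∫ x, gauss μ v x = 1 := by
  rw [gauss_eq_gaussianPDFReal hv.le]
  exact integral_gaussianPDFReal_eq_one μ (by simpa using hv)

lemma inv_gauss (μ v x : ℝ) :
    (gauss μ v x)⁻¹ = √(2 * π * v) * rexp ((x - μ) ^ 2 / (2 * v)) := by
  rw [gauss, mul_inv, inv_inv, ← Real.exp_neg, neg_div, neg_neg]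

lemma gauss_mul_gauss {a b : ℝ} (ha : 0 < a) (hb : 0 < b) (μ r x : ℝ) :
    gauss x a r * gauss μ b x =
      gauss μ (a + b) r * gauss ((b * r + a * μ) / (a + b)) (a * b / (a + b)) x := by
  unfold gauss
  conv_lhs => rw [mul_mul_mul_comm, ← Real.exp_add]
  conv_rhs => rw [mul_mul_mul_comm, ← Real.exp_add]
  refine congrArg₂ (· * ·) ?_ (congrArg rexp ?_)
  · rw [← mul_inv, ← mul_inv, ← Real.sqrt_mul (by positivity), ← Real.sqrt_mul (by positivity)]
    congr 2
    field_simp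
  · field_simp
    ring

lemma gauss_div_gauss {s σ : ℝ} (hs : 0 < s) (hsσ : s < σ) (μ r x : ℝ) :
    gauss μ s x / gauss x σ r =
      σ / (σ - s) / gauss μ (σ - s) r * gauss ((σ * μ - s * r) / (σ - s)) (s * σ / (σ - s)) x := by
  have hσs : 0 < σ - s := sub_pos.mpr hsσ
  have hσ : 0 < σ := hs.trans hsσ
  rw [div_eq_mul_inv _ (gauss x σ r), div_eq_mul_inv _ (gauss μ (σ - s) r), inv_gauss, inv_gauss]
  unfold gauss
  conv_lhs => rw [mul_mul_mul_comm, ← Real.exp_add]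
  conv_rhs => rw [mul_assoc, mul_mul_mul_comm, ← Real.exp_add, ← mul_assoc]
  refine congrArg₂ (· * ·) ?_ (congrArg rexp ?_)
  · have h : σ / (σ - s) = √((σ / (σ - s)) ^ 2) := (Real.sqrt_sq (by positivity)).symm
    rw [h, ← Real.sqrt_inv, ← Real.sqrt_inv, ← Real.sqrt_mul (by positivity),
      ← Real.sqrt_mul (by positivity), ← Real.sqrt_mul (by positivity)]
    congr 1
    field_simp
  · field_simp
    ring

lemma integral_gauss_mul_gauss {a b : ℝ} (ha : 0 < a) (hb : 0 < b) (μ r : ℝ) :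
    ∫ x, gauss x a r * gauss μ b x = gauss μ (a + b) r := by
  simp_rw [gauss_mul_gauss ha hb μ r]
  rw [integral_const_mul, integral_gauss (by positivity), mul_one]

lemma integral_gauss_div_gauss {s σ : ℝ} (hs : 0 < s) (hsσ : s < σ) (μ r : ℝ) :
    ∫ x, gauss μ s x / gauss x σ r = σ / (σ - s) / gauss μ (σ - s) r := by
  simp_rw [gauss_div_gauss hs hsσ μ r]
  rw [integral_const_mul, integral_gauss (div_pos (mul_pos hs (hs.trans hsσ)) (sub_pos.mpr hsσ)),
    mul_one]

theorem expected_importance_weight_gaussian_general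
    (σ₀2 σj2 σGP₀2 σGPj2 μGP₀ μGPj r : ℝ)
    (h₀ : 0 < σ₀2) (hGP₀ : 0 < σGP₀2) (hGPj : 0 < σGPj2)
    (hlt : σGPj2 < σj2) :
    (∫ r0 : ℝ, ∫ rj : ℝ,
        (gauss r0 σ₀2 r / gauss rj σj2 r) * gauss μGP₀ σGP₀2 r0 * gauss μGPj σGPj2 rj) =
      (σj2 / (σj2 - σGPj2)) *
        (gauss μGP₀ (σ₀2 + σGP₀2) r / gauss μGPj (σj2 - σGPj2) r) := by
  calc _ = ∫ r0 : ℝ, gauss r0 σ₀2 r * gauss μGP₀ σGP₀2 r0 *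
          (σj2 / (σj2 - σGPj2) / gauss μGPj (σj2 - σGPj2) r) := by
        congr 1 with r0
        rw [← integral_gauss_div_gauss hGPj hlt, ← integral_const_mul]
        congr 1 with rj
        ring
    _ = _ := by
      rw [integral_mul_const, integral_gauss_mul_gauss h₀ hGP₀]
      ring

/-- Expected importance weight for Gaussian reward models. The weight
`w = N(r | r̄⁽⁰⁾, σ₀²)/N(r | r̄⁽ʲ⁾, σⱼ²)` with independent Gaussian-distributed means
`r̄⁽⁰⁾ ~ N(μ_GP₀, σ_GP₀²)`, `r̄⁽ʲ⁾ ~ N(μ_GPⱼ, σ_GPⱼ²)` has expectation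
`(σⱼ²/(σⱼ² − σ_GPⱼ²)) · N(r | μ_GP₀, σ₀² + σ_GP₀²) / N(r | μ_GPⱼ, σⱼ² − σ_GPⱼ²)`. -/
theorem expected_importance_weight_gaussian
    (σ₀2 σj2 σGP₀2 σGPj2 μGP₀ μGPj r : ℝ)
    (h₀ : 0 < σ₀2) (hj : 0 < σj2) (hGP₀ : 0 < σGP₀2) (hGPj : 0 < σGPj2)
    (hlt : σGPj2 < σj2) :
    (∫ r0 : ℝ, ∫ rj : ℝ,
        (gauss r0 σ₀2 r / gauss rj σj2 r) * gauss μGP₀ σGP₀2 r0 * gauss μGPj σGPj2 rj) =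
      (σj2 / (σj2 - σGPj2)) *
        (gauss μGP₀ (σ₀2 + σGP₀2) r / gauss μGPj (σj2 - σGPj2) r) :=
  expected_importance_weight_gaussian_general σ₀2 σj2 σGP₀2 σGPj2 μGP₀ μGPj r h₀ hGP₀ hGPj hlt
end

section
/- Let μ be a probability measure on X, let q(·|x) be a conditional density on Y, let w̃ : X × Y → ℝ≥0 be measurable and let f : X → ℝ be bounded. Define the expected weighted squared loss E_Q[w̃(X,Y)|f(X)−Y|²] where Q(dx,dy) = μ(dx)q(dy|x). Then E_Q[w̃(X,Y)|f(X)−Y|²] = ‖f − h̃‖²_μ + E_μ[f(X)² (E_q[w̃(X,Y)|X] − 1)] + K, where h̃(x) = E_q[w̃(x,Y)Y | x] and K = E_μ[E_q[w̃(X,Y)Y²|X] − E_q[w̃(X,Y)Y|X]²] is independent of f. -/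
open MeasureTheory

/-! Expanding the square, the inner integral equals `f² W − 2 f h̃ + S` with `W = E_q[w̃|x]`,
`S = E_q[w̃ Y²|x]`, and this is `(f − h̃)² + f² (W − 1) + (S − h̃²)` pointwise in `x`. -/

theorem integral_mul_sub_sq_mul {ν : Measure ℝ} (w q : ℝ → ℝ) (c : ℝ)
    (h0 : Integrable (fun y => w y * q y) ν) (h1 : Integrable (fun y => w y * y * q y) ν)
    (h2 : Integrable (fun y => w y * y ^ 2 * q y) ν) :
    ∫ y, w y * (c - y) ^ 2 * q y ∂ν =
      c ^ 2 * ∫ y, w y * q y ∂ν - 2 * c * ∫ y, w y * y * q y ∂ν + ∫ y, w y * y ^ 2 * q y ∂ν := by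
  have h_expand : (fun y => w y * (c - y) ^ 2 * q y) =
      fun y => c ^ 2 * (w y * q y) - 2 * c * (w y * y * q y) + w y * y ^ 2 * q y := by
    funext y; ring
  have hquad : Integrable (fun y => c ^ 2 * (w y * q y)) ν := h0.const_mul _
  have hlin : Integrable (fun y => 2 * c * (w y * y * q y)) ν := h1.const_mul _
  rw [h_expand, integral_add (f := fun y => _ - _) (hquad.sub hlin) h2,
    integral_sub hquad hlin, integral_const_mul, integral_const_mul]

theorem weighted_squared_loss_decomposition_general
    {X : Type*} [MeasurableSpace X] (μ : Measure X)
    (q : X → ℝ → ℝ)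
    (w : X → ℝ → ℝ)
    (f : X → ℝ)
    (hInt0 : ∀ x, Integrable (fun y => w x y * q x y))
    (hInt1 : ∀ x, Integrable (fun y => w x y * y * q x y))
    (hInt2 : ∀ x, Integrable (fun y => w x y * y ^ 2 * q x y))
    (hIntA : Integrable (fun x => (f x - ∫ y, w x y * y * q x y) ^ 2) μ)
    (hIntB : Integrable (fun x => f x ^ 2 * ((∫ y, w x y * q x y) - 1)) μ)
    (hIntK : Integrable
      (fun x => (∫ y, w x y * y ^ 2 * q x y) - (∫ y, w x y * y * q x y) ^ 2) μ) :
    (∫ x, (∫ y, w x y * (f x - y) ^ 2 * q x y) ∂μ) =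
      (∫ x, (f x - ∫ y, w x y * y * q x y) ^ 2 ∂μ) +
        (∫ x, f x ^ 2 * ((∫ y, w x y * q x y) - 1) ∂μ) +
        (∫ x, ((∫ y, w x y * y ^ 2 * q x y) - (∫ y, w x y * y * q x y) ^ 2) ∂μ) := by
  have hIntAB : Integrable (fun x => (f x - ∫ y, w x y * y * q x y) ^ 2
      + f x ^ 2 * ((∫ y, w x y * q x y) - 1)) μ := hIntA.add hIntB
  rw [← integral_add hIntA hIntB, ← integral_add hIntAB hIntK]
  congr 1
  funext x
  rw [integral_mul_sub_sq_mul (w x) (q x) (f x) (hInt0 x) (hInt1 x) (hInt2 x)]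
  ring

/-- Bias decomposition of the weighted squared loss: with `Q(dx,dy) = μ(dx) q(y|x) dy`,
`E_Q[w̃(X,Y)|f(X)−Y|²] = ‖f − h̃‖²_μ + E_μ[f(X)²(E_q[w̃|X] − 1)] + K`, where
`h̃(x) = E_q[w̃(x,Y)Y | x]` and `K = E_μ[E_q[w̃ Y²|X] − E_q[w̃ Y|X]²]` does not depend on `f`. -/
theorem weighted_squared_loss_decomposition
    {X : Type*} [MeasurableSpace X] (μ : Measure X) [IsProbabilityMeasure μ]
    (q : X → ℝ → ℝ) (hq0 : ∀ x y, 0 ≤ q x y) (hq1 : ∀ x, ∫ y, q x y = 1)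
    (w : X → ℝ → ℝ) (hw0 : ∀ x y, 0 ≤ w x y)
    (f : X → ℝ) (Fmax : ℝ) (hf : ∀ x, |f x| ≤ Fmax)
    (hInt0 : ∀ x, Integrable (fun y => w x y * q x y))
    (hInt1 : ∀ x, Integrable (fun y => w x y * y * q x y))
    (hInt2 : ∀ x, Integrable (fun y => w x y * y ^ 2 * q x y))
    (hIntL : Integrable (fun x => ∫ y, w x y * (f x - y) ^ 2 * q x y) μ)
    (hIntA : Integrable (fun x => (f x - ∫ y, w x y * y * q x y) ^ 2) μ)
    (hIntB : Integrable (fun x => f x ^ 2 * ((∫ y, w x y * q x y) - 1)) μ)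
    (hIntK : Integrable
      (fun x => (∫ y, w x y * y ^ 2 * q x y) - (∫ y, w x y * y * q x y) ^ 2) μ) :
    (∫ x, (∫ y, w x y * (f x - y) ^ 2 * q x y) ∂μ) =
      (∫ x, (f x - ∫ y, w x y * y * q x y) ^ 2 ∂μ) +
        (∫ x, f x ^ 2 * ((∫ y, w x y * q x y) - 1) ∂μ) +
        (∫ x, ((∫ y, w x y * y ^ 2 * q x y) - (∫ y, w x y * y * q x y) ^ 2) ∂μ) :=
  weighted_squared_loss_decomposition_general μ q w f hInt0 hInt1 hInt2 hIntA hIntB hIntK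
end
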